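/- Angular momentum bound for a bound Kepler pair: let α, β, h > 0, let ζ ∈ ℝ³ with ζ ≠ 0, and let v ∈ ℝ³ satisfy ½ α ‖v‖² − β/‖ζ‖ ≤ −h. Then the angular momentum J = α (ζ × v) satisfies ‖J‖ ≤ β √(α/(2h)). -/

import Mathlib

/-!
The energy bound gives `‖ζ‖ (h + ½α‖v‖²) ≤ β`, and AM–GM gives
`h + ½α‖v‖² ≥ ‖v‖ √(2αh)`; together `α ‖ζ‖ ‖v‖ ≤ β √(α/(2h))`, which dominates
`‖α (ζ × v)‖` by the Lagrange identity.
-/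

/-- The cross product on `ℝ³ = EuclideanSpace ℝ (Fin 3)`. -/
noncomputable def cross3 (a b : EuclideanSpace ℝ (Fin 3)) : EuclideanSpace ℝ (Fin 3) :=
  WithLp.toLp 2 ![a 1 * b 2 - a 2 * b 1, a 2 * b 0 - a 0 * b 2, a 0 * b 1 - a 1 * b 0]

open Matrix

theorem cross3_eq_toLp_crossProduct (a b : EuclideanSpace ℝ (Fin 3)) :
    cross3 a b = WithLp.toLp 2 (a.ofLp ⨯₃ b.ofLp) :=
  rfl

theorem norm_cross3_sq (a b : EuclideanSpace ℝ (Fin 3)) :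
    ‖cross3 a b‖ ^ 2 = ‖a‖ ^ 2 * ‖b‖ ^ 2 - inner ℝ a b ^ 2 := by
  simp only [← real_inner_self_eq_norm_sq, EuclideanSpace.inner_eq_star_dotProduct, star_trivial,
    cross3_eq_toLp_crossProduct, cross_dot_cross, dotProduct_comm b.ofLp a.ofLp]
  ring

theorem norm_cross3_le (a b : EuclideanSpace ℝ (Fin 3)) : ‖cross3 a b‖ ≤ ‖a‖ * ‖b‖ := by
  have hsq : ‖cross3 a b‖ ^ 2 ≤ (‖a‖ * ‖b‖) ^ 2 := by
    rw [norm_cross3_sq, mul_pow]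
    linarith [sq_nonneg (inner ℝ a b)]
  exact (pow_le_pow_iff_left₀ (norm_nonneg _) (by positivity) two_ne_zero).1 hsq

theorem mul_le_add_half_mul_sq_mul_sqrt {α h : ℝ} (hα : 0 < α) (hh : 0 < h) (x : ℝ) :
    α * x ≤ (h + 1 / 2 * α * x ^ 2) * √(α / (2 * h)) := by
  set s := √(α / (2 * h))
  have hα_eq : α = 2 * h * s ^ 2 := by
    rw [Real.sq_sqrt (by positivity)]
    field_simp
  have hs : 0 ≤ s := Real.sqrt_nonneg _
  rw [hα_eq]
  calc 2 * h * s ^ 2 * x = (h * s) * (2 * 1 * (s * x)) := by ring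
    _ ≤ (h * s) * (1 ^ 2 + (s * x) ^ 2) := by gcongr; exact two_mul_le_add_sq _ _
    _ = (h + 1 / 2 * (2 * h * s ^ 2) * x ^ 2) * s := by ring

theorem mul_add_le_of_sub_div_le_neg {r β e h : ℝ} (hr : 0 ≤ r) (he : 0 ≤ e) (hh : 0 < h)
    (hE : e - β / r ≤ -h) : r * (h + e) ≤ β := by
  have hle : h + e ≤ β / r := by linarith
  have hr0 : r ≠ 0 := by
    rintro rfl
    rw [div_zero] at hle
    linarith
  calc r * (h + e) ≤ r * (β / r) := by gcongr
    _ = β := mul_div_cancel₀ β hr0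

theorem kepler_pair_angular_momentum_bound_general
    (α β h : ℝ) (hα : 0 < α) (hh : 0 < h)
    (ζ v : EuclideanSpace ℝ (Fin 3))
    (hE : (1 / 2) * α * ‖v‖ ^ 2 - β / ‖ζ‖ ≤ -h) :
    ‖α • cross3 ζ v‖ ≤ β * Real.sqrt (α / (2 * h)) := by
  have henergy : ‖ζ‖ * (h + 1 / 2 * α * ‖v‖ ^ 2) ≤ β :=
    mul_add_le_of_sub_div_le_neg (norm_nonneg ζ) (by positivity) hh hE
  calc ‖α • cross3 ζ v‖ = α * ‖cross3 ζ v‖ := by rw [norm_smul, Real.norm_of_nonneg hα.le]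
    _ ≤ α * (‖ζ‖ * ‖v‖) := by gcongr; exact norm_cross3_le ζ v
    _ = ‖ζ‖ * (α * ‖v‖) := by ring
    _ ≤ ‖ζ‖ * ((h + 1 / 2 * α * ‖v‖ ^ 2) * √(α / (2 * h))) := by
        gcongr ‖ζ‖ * ?_; exact mul_le_add_half_mul_sq_mul_sqrt hα hh _
    _ = ‖ζ‖ * (h + 1 / 2 * α * ‖v‖ ^ 2) * √(α / (2 * h)) := by ring
    _ ≤ β * √(α / (2 * h)) := by gcongr

/-- **Angular momentum bound for a bound Kepler pair.** If `½α‖v‖² − β/‖ζ‖ ≤ −h` with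
`α, β, h > 0` and `ζ ≠ 0`, then the angular momentum `J = α(ζ × v)` satisfies
`‖J‖ ≤ β √(α/(2h))`. -/
theorem kepler_pair_angular_momentum_bound
    (α β h : ℝ) (hα : 0 < α) (hβ : 0 < β) (hh : 0 < h)
    (ζ v : EuclideanSpace ℝ (Fin 3)) (hζ : ζ ≠ 0)
    (hE : (1 / 2) * α * ‖v‖ ^ 2 - β / ‖ζ‖ ≤ -h) :
    ‖α • cross3 ζ v‖ ≤ β * Real.sqrt (α / (2 * h)) :=
  kepler_pair_angular_momentum_bound_general α β h hα hh ζ v hE
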